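/- arXiv:2405.04951 — 3 statements merged into one kernel-verified Lean document; each statement's English description precedes it below -/
import Mathlib

section
/- For every real m > 0 and every x ≥ 0, the function φ_m defined by φ_m(x) = e^{-x} ∑_{j=0}^∞ (x^j/j!) ψ(j+m), where ψ is the digamma function, satisfies φ_m(x) = ψ(m) + ∫_0^1 (1 - e^{-xs})(1-s)^{m-1}/s ds. -/
open Real MeasureTheory Filter ProbabilityTheory

/-- The digamma function psi(x) = Gamma'(x)/Gamma(x). -/
noncomputable def psi (x : ℝ) : ℝ := deriv Real.Gamma x / Real.Gamma x

/-- phi_m(x) = e^{-x} * sum_j (x^j/j!) psi(j+m). -/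
noncomputable def phi (m x : ℝ) : ℝ :=
  Real.exp (-x) * ∑' j : ℕ, x ^ j / (Nat.factorial j : ℝ) * psi (j + m)

/-! Iterating `ψ(y + 1) = ψ(y) + 1/y` gives `ψ(j + m) = ψ(m) + ∑_{k<j} 1/(m + k)`, and writing
`1/(m + k) = ∫₀¹ (1 - s)^(m + k - 1) ds` and summing the geometric series in `k` turns this into
`ψ(j + m) - ψ(m) = ∫₀¹ (1 - (1 - s)^j) (1 - s)^(m - 1) / s ds` with a nonnegative integrand.
Since these integrals are at most `j / m`, the Poisson average over `j` may be taken inside the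
integral, where `∑ⱼ e^{-x} xʲ/j! (1 - (1 - s)ʲ) = 1 - e^{-xs}`. -/

open Finset
open scoped Nat

theorem psi_add_one {x : ℝ} (hx : ∀ n : ℕ, x ≠ -n) : psi (x + 1) = psi x + 1 / x := by
  have hx0 : x ≠ 0 := by simpa using hx 0
  have hGamma_add_one : (fun y => Gamma (y + 1)) =ᶠ[nhds x] fun y => y * Gamma y := by
    filter_upwards [isOpen_ne.mem_nhds hx0] with y hy using Gamma_add_one hy
  calc psi (x + 1) = logDeriv (fun y => Gamma (y + 1)) x := by
        rw [logDeriv_apply, deriv_comp_add_const]; rfl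
    _ = logDeriv (fun y => y * Gamma y) x := (logDeriv_congr_nhds hGamma_add_one).eq_of_nhds
    _ = psi x + 1 / x := by
        rw [logDeriv_mul (f := fun y => y) x hx0 (Gamma_ne_zero hx) differentiableAt_id
            (differentiableAt_Gamma hx),
          logDeriv_id', add_comm]; rfl

theorem psi_nat_add {m : ℝ} (hm : ∀ n : ℕ, m ≠ -n) (j : ℕ) :
    psi (j + m) = psi m + ∑ k ∈ range j, 1 / (m + k) := by
  induction j with
  | zero => simp
  | succ j ih =>
    have hjm : ∀ n : ℕ, (j + m : ℝ) ≠ -n := fun n h =>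
      hm (j + n) (by push_cast; linarith)
    rw [Nat.cast_succ, add_right_comm, psi_add_one hjm, ih, sum_range_succ, add_comm (j : ℝ) m,
      add_assoc]

theorem sum_one_div_add_le {m : ℝ} (hm : 0 < m) (j : ℕ) :
    ∑ k ∈ range j, 1 / (m + k) ≤ j / m := by
  calc ∑ k ∈ range j, 1 / (m + k) ≤ ∑ k ∈ range j, 1 / m :=
        sum_le_sum fun k _ => one_div_le_one_div_of_le hm (le_add_of_nonneg_right k.cast_nonneg)
    _ = j / m := by simp [div_eq_mul_inv]

theorem summable_pow_div_factorial_mul_sum_one_div {m : ℝ} (hm : 0 < m) (x : ℝ) :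
    Summable fun j : ℕ => x ^ j / (j ! : ℝ) * ∑ k ∈ range j, 1 / (m + k) := by
  refine Summable.of_norm_bounded ((summable_pow_div_factorial (2 * |x|)).mul_left m⁻¹) fun j => ?_
  have hsum : 0 ≤ ∑ k ∈ range j, 1 / (m + k) := sum_nonneg fun k _ => by positivity
  have hj : (j : ℝ) ≤ 2 ^ j := by exact_mod_cast j.lt_two_pow_self.le
  rw [norm_mul, Real.norm_of_nonneg hsum, norm_div, norm_pow, Real.norm_natCast, mul_pow]
  calc |x| ^ j / (j ! : ℝ) * ∑ k ∈ range j, 1 / (m + k) ≤ |x| ^ j / (j ! : ℝ) * (2 ^ j / m) := by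
        gcongr
        exact (sum_one_div_add_le hm j).trans (by gcongr)
    _ = m⁻¹ * (2 ^ j * |x| ^ j / j !) := by ring

theorem tsum_pow_div_factorial (x : ℝ) : ∑' j : ℕ, x ^ j / (j ! : ℝ) = rexp x := by
  rw [Real.exp_eq_exp_ℝ, NormedSpace.exp_eq_tsum_div]

theorem phi_eq_psi_add_tsum {m : ℝ} (hm : 0 < m) (x : ℝ) :
    phi m x = psi m + ∑' j : ℕ, rexp (-x) * (x ^ j / j !) * ∑ k ∈ range j, 1 / (m + k) := by
  have hm' : ∀ n : ℕ, m ≠ -n := fun n => (neg_nonpos.2 n.cast_nonneg).trans_lt hm |>.ne'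
  have hsplit : ∀ j : ℕ, x ^ j / (j ! : ℝ) * psi (j + m)
      = x ^ j / j ! * psi m + x ^ j / j ! * ∑ k ∈ range j, 1 / (m + k) := fun j => by
    rw [psi_nat_add hm' j, mul_add]
  rw [phi, tsum_congr hsplit, ((summable_pow_div_factorial x).mul_right _).tsum_add
      (summable_pow_div_factorial_mul_sum_one_div hm x), tsum_mul_right, tsum_pow_div_factorial,
    mul_add, ← mul_assoc, ← Real.exp_add, neg_add_cancel, Real.exp_zero, one_mul, ← tsum_mul_left]
  simp only [mul_assoc]

theorem integrableOn_one_sub_rpow {c : ℝ} (hc : -1 < c) :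
    IntegrableOn (fun s : ℝ => (1 - s) ^ c) (Set.Ioc 0 1) := by
  rw [← intervalIntegrable_iff_integrableOn_Ioc_of_le zero_le_one]
  simpa using
    ((intervalIntegral.intervalIntegrable_rpow' hc (a := 0) (b := 1)).comp_sub_left 1).symm

theorem setIntegral_one_sub_rpow {c : ℝ} (hc : -1 < c) :
    ∫ s in Set.Ioc 0 1, (1 - s) ^ c = 1 / (c + 1) := by
  rw [← intervalIntegral.integral_of_le zero_le_one,
    intervalIntegral.integral_comp_sub_left (fun u : ℝ => u ^ c), sub_self, sub_zero,
    integral_rpow (Or.inl hc), one_rpow, zero_rpow (by linarith), sub_zero]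

theorem one_sub_pow_mul_rpow_div_eq_sum (m : ℝ) {s : ℝ} (hs : s ∈ Set.Ioo 0 1) (j : ℕ) :
    (1 - (1 - s) ^ j) * (1 - s) ^ (m - 1) / s = ∑ k ∈ range j, (1 - s) ^ (m - 1 + k) := by
  have hs1 : 0 < 1 - s := sub_pos.2 hs.2
  have hgeom : ∑ k ∈ range j, (1 - s) ^ k = (1 - (1 - s) ^ j) / s := by
    rw [geom_sum_eq (by linarith [hs.1]), sub_sub_cancel_left, div_neg, ← neg_div, neg_sub]
  simp_rw [rpow_add hs1, rpow_natCast, ← mul_sum, hgeom]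
  ring

theorem one_sub_pow_mul_rpow_div_ae_eq_sum (m : ℝ) (j : ℕ) :
    (fun s : ℝ => (1 - (1 - s) ^ j) * (1 - s) ^ (m - 1) / s)
      =ᵐ[volume.restrict (Set.Ioc 0 1)] fun s => ∑ k ∈ range j, (1 - s) ^ (m - 1 + k) := by
  rw [← Measure.restrict_congr_set Ioo_ae_eq_Ioc]
  filter_upwards [ae_restrict_mem measurableSet_Ioo] with s hs
    using one_sub_pow_mul_rpow_div_eq_sum m hs j

theorem integrableOn_one_sub_pow_mul_rpow_div {m : ℝ} (hm : 0 < m) (j : ℕ) :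
    IntegrableOn (fun s : ℝ => (1 - (1 - s) ^ j) * (1 - s) ^ (m - 1) / s) (Set.Ioc 0 1) := by
  have hc (k : ℕ) : -1 < m - 1 + (k : ℝ) := by linarith [k.cast_nonneg (α := ℝ)]
  exact (integrable_finsetSum _ fun k _ => integrableOn_one_sub_rpow (hc k)).congr
    (one_sub_pow_mul_rpow_div_ae_eq_sum m j).symm

theorem setIntegral_one_sub_pow_mul_rpow_div {m : ℝ} (hm : 0 < m) (j : ℕ) :
    ∫ s in Set.Ioc 0 1, (1 - (1 - s) ^ j) * (1 - s) ^ (m - 1) / s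
      = ∑ k ∈ range j, 1 / (m + k) := by
  have hc (k : ℕ) : -1 < m - 1 + (k : ℝ) := by linarith [k.cast_nonneg (α := ℝ)]
  rw [integral_congr_ae (one_sub_pow_mul_rpow_div_ae_eq_sum m j),
    integral_finsetSum _ fun k _ => integrableOn_one_sub_rpow (hc k)]
  refine sum_congr rfl fun k _ => ?_
  rw [setIntegral_one_sub_rpow (hc k)]
  congr 1
  ring

theorem one_sub_pow_mul_rpow_div_nonneg (m : ℝ) {s : ℝ} (hs : s ∈ Set.Ioc 0 1) (j : ℕ) :
    0 ≤ (1 - (1 - s) ^ j) * (1 - s) ^ (m - 1) / s := by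
  have hs1 : 0 ≤ 1 - s := sub_nonneg.2 hs.2
  have hpow : (1 - s) ^ j ≤ 1 := pow_le_one₀ hs1 (by linarith [hs.1])
  exact div_nonneg (mul_nonneg (sub_nonneg.2 hpow) (rpow_nonneg hs1 _)) hs.1.le

theorem integral_tsum_mul_one_sub_pow_mul_rpow_div {m : ℝ} (hm : 0 < m) {c : ℕ → ℝ}
    (hc : Summable fun j => |c j| * ∑ k ∈ range j, 1 / (m + k)) :
    ∫ s in Set.Ioc 0 1, ∑' j, c j * ((1 - (1 - s) ^ j) * (1 - s) ^ (m - 1) / s)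
      = ∑' j, c j * ∑ k ∈ range j, 1 / (m + k) := by
  have hint : ∀ j : ℕ, Integrable (fun s => c j * ((1 - (1 - s) ^ j) * (1 - s) ^ (m - 1) / s))
      (volume.restrict (Set.Ioc 0 1)) := fun j =>
    (integrableOn_one_sub_pow_mul_rpow_div hm j).const_mul _
  have hnorm : ∀ j : ℕ,
      ∫ s in Set.Ioc 0 1, ‖c j * ((1 - (1 - s) ^ j) * (1 - s) ^ (m - 1) / s)‖
        = |c j| * ∑ k ∈ range j, 1 / (m + k) := fun j => by
    rw [← setIntegral_one_sub_pow_mul_rpow_div hm j, ← integral_const_mul]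
    refine setIntegral_congr_fun measurableSet_Ioc fun s hs => ?_
    rw [norm_mul, Real.norm_eq_abs, Real.norm_of_nonneg (one_sub_pow_mul_rpow_div_nonneg m hs j)]
  rw [← integral_tsum_of_summable_integral_norm hint (by simpa only [hnorm] using hc)]
  exact tsum_congr fun j => by rw [integral_const_mul, setIntegral_one_sub_pow_mul_rpow_div hm j]

theorem tsum_exp_neg_mul_pow_div_factorial_mul_one_sub_pow (x t : ℝ) :
    ∑' j : ℕ, rexp (-x) * (x ^ j / j !) * (1 - t ^ j) = 1 - rexp (-(x * (1 - t))) := by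
  have hsplit : ∀ j : ℕ, rexp (-x) * (x ^ j / (j ! : ℝ)) * (1 - t ^ j)
      = rexp (-x) * (x ^ j / j !) - rexp (-x) * ((x * t) ^ j / j !) := fun j => by
    rw [mul_pow]; ring
  rw [tsum_congr hsplit, ((summable_pow_div_factorial x).mul_left _).tsum_sub
      ((summable_pow_div_factorial (x * t)).mul_left _), tsum_mul_left, tsum_mul_left,
    tsum_pow_div_factorial, tsum_pow_div_factorial, ← Real.exp_add, ← Real.exp_add,
    neg_add_cancel, Real.exp_zero, mul_one_sub, neg_sub, neg_add_eq_sub]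

theorem stmt0_general (m : ℝ) (hm : 0 < m) (x : ℝ) :
    phi m x = psi m + ∫ s in (0:ℝ)..1, (1 - Real.exp (-(x * s))) * (1 - s) ^ (m - 1) / s := by
  have hc : Summable fun j : ℕ => |rexp (-x) * (x ^ j / j !)| * ∑ k ∈ range j, 1 / (m + k) := by
    simpa only [abs_mul, abs_div, abs_pow, abs_of_pos (exp_pos _), Nat.abs_cast, mul_assoc]
      using (summable_pow_div_factorial_mul_sum_one_div hm |x|).mul_left (rexp (-x))
  rw [phi_eq_psi_add_tsum hm x, ← integral_tsum_mul_one_sub_pow_mul_rpow_div hm hc,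
    intervalIntegral.integral_of_le zero_le_one]
  congr 1
  refine setIntegral_congr_fun measurableSet_Ioc fun s _ => ?_
  simp_rw [mul_div_assoc, ← mul_assoc, tsum_mul_right,
    tsum_exp_neg_mul_pow_div_factorial_mul_one_sub_pow, sub_sub_cancel]

theorem stmt0 (m : ℝ) (hm : 0 < m) (x : ℝ) (hx : 0 ≤ x) :
    phi m x = psi m + ∫ s in (0:ℝ)..1, (1 - Real.exp (-(x * s))) * (1 - s) ^ (m - 1) / s :=
  stmt0_general m hm x
end

section
/- For every real m > 0 and every x ≥ 0, the derivative of φ_m satisfies φ_m'(x) = e^{-x} ∑_{j=0}^∞ x^j/(j!(m+j)); equivalently φ_m'(x) = E[1/(m+ξ)] where ξ is a Poisson random variable with mean x. -/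
/-!
The recurrence `ψ(y + 1) = ψ(y) + 1/y` makes the coefficients `ψ(j + m)` grow at most linearly
in `j`, so the series may be differentiated term by term. Differentiating
`e^{-x} ∑ x^j/j! a_j` gives `e^{-x} ∑ x^j/j! (a_{j+1} - a_j)`, and here `a_{j+1} - a_j = 1/(m + j)`.
-/

open Real MeasureTheory Filter ProbabilityTheory

open scoped Nat Topology

namespace Real

theorem deriv_Gamma_add_one {s : ℝ} (hs : ∀ n : ℕ, s ≠ -n) :
    deriv Gamma (s + 1) = Gamma s + s * deriv Gamma s := by
  have hs0 : s ≠ 0 := by simpa using hs 0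
  have hshift : (fun t => Gamma (t + 1)) =ᶠ[𝓝 s] fun t => t * Gamma t :=
    (eventually_ne_nhds hs0).mono fun t ht => Gamma_add_one ht
  have hprod : HasDerivAt (fun t => t * Gamma t) (1 * Gamma s + s * deriv Gamma s) s :=
    (hasDerivAt_id' s).mul (differentiableAt_Gamma hs).hasDerivAt
  rw [← deriv_comp_add_const, hshift.deriv_eq, hprod.deriv, one_mul]

end Real

theorem psi_add_one_s1 {y : ℝ} (hy : ∀ n : ℕ, y ≠ -n) : psi (y + 1) = psi y + y⁻¹ := by
  have hy0 : y ≠ 0 := by simpa using hy 0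
  have hG := Real.Gamma_ne_zero hy
  rw [psi, psi, Real.deriv_Gamma_add_one hy, Real.Gamma_add_one hy0]
  field_simp
  ring

theorem psi_add_one_of_pos {y : ℝ} (hy : 0 < y) : psi (y + 1) = psi y + y⁻¹ :=
  psi_add_one_s1 fun n => ((neg_nonpos.2 n.cast_nonneg).trans_lt hy).ne'

theorem abs_psi_nat_add_le {m : ℝ} (hm : 0 < m) (j : ℕ) : |psi (j + m)| ≤ |psi m| + j / m := by
  induction j with
  | zero => simp
  | succ j ih =>
    have hjm : 0 < (j : ℝ) + m := by positivity
    have hinv : ((j : ℝ) + m)⁻¹ ≤ m⁻¹ := inv_anti₀ hm (by linarith [j.cast_nonneg (α := ℝ)])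
    rw [show ((j + 1 : ℕ) : ℝ) + m = (j + m) + 1 by push_cast; ring, psi_add_one_of_pos hjm]
    calc |psi (j + m) + ((j : ℝ) + m)⁻¹| ≤ |psi (j + m)| + ((j : ℝ) + m)⁻¹ := by
          simpa [abs_of_pos (inv_pos.2 hjm)] using abs_add_le (psi (j + m)) ((j : ℝ) + m)⁻¹
      _ ≤ |psi m| + j / m + m⁻¹ := add_le_add ih hinv
      _ = |psi m| + ((j + 1 : ℕ) : ℝ) / m := by push_cast; ring

theorem abs_psi_nat_add_le_mul_two_pow {m : ℝ} (hm : 0 < m) (j : ℕ) :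
    |psi (j + m)| ≤ (|psi m| + m⁻¹) * 2 ^ j := by
  have h1 : |psi m| ≤ |psi m| * 2 ^ j :=
    le_mul_of_one_le_right (abs_nonneg _) (one_le_pow₀ one_le_two)
  have h2 : (j : ℝ) * m⁻¹ ≤ 2 ^ j * m⁻¹ :=
    mul_le_mul_of_nonneg_right (by exact_mod_cast Nat.lt_two_pow_self.le) (inv_nonneg.2 hm.le)
  have := abs_psi_nat_add_le hm j
  rw [div_eq_mul_inv] at this
  linarith

noncomputable def egf (a : ℕ → ℝ) (y : ℝ) : ℝ := ∑' j, y ^ j / (j ! : ℝ) * a j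

section egf

variable {a : ℕ → ℝ} {C K : ℝ}

theorem summable_egf (ha : ∀ j, |a j| ≤ C * K ^ j) (y : ℝ) :
    Summable fun j => y ^ j / (j ! : ℝ) * a j := by
  refine .of_norm_bounded ((Real.summable_pow_div_factorial (|y| * K)).mul_left C) fun j => ?_
  rw [Real.norm_eq_abs, abs_mul, abs_div, abs_pow, Nat.abs_cast]
  calc |y| ^ j / j ! * |a j| ≤ |y| ^ j / j ! * (C * K ^ j) := by gcongr; exact ha j
    _ = C * ((|y| * K) ^ j / j !) := by ring

theorem hasDerivAt_egf (ha : ∀ j, |a j| ≤ C * K ^ j) (x : ℝ) :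
    HasDerivAt (egf a) (egf (fun j => a (j + 1)) x) x := by
  set R := |x| + 1
  have hx : x ∈ Set.Ioo (-R) R := abs_lt.1 (lt_add_one _)
  have hsplit : egf a = fun y => a 0 + ∑' j, y ^ (j + 1) / ((j + 1)! : ℝ) * a (j + 1) := by
    funext y
    rw [egf, (summable_egf ha y).tsum_eq_zero_add]
    simp
  have hterm : ∀ j y, HasDerivAt (fun y => y ^ (j + 1) / ((j + 1)! : ℝ) * a (j + 1))
      (y ^ j / j ! * a (j + 1)) y := by
    intro j y
    refine (((hasDerivAt_pow (j + 1) y).div_const _).mul_const (a (j + 1))).congr_deriv ?_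
    rw [Nat.factorial_succ]
    push_cast
    field_simp
  have hbound : ∀ j, ∀ y ∈ Set.Ioo (-R) R,
      ‖y ^ j / j ! * a (j + 1)‖ ≤ C * K * ((R * K) ^ j / j !) := by
    intro j y hy
    rw [Real.norm_eq_abs, abs_mul, abs_div, abs_pow, Nat.abs_cast]
    calc |y| ^ j / j ! * |a (j + 1)| ≤ R ^ j / j ! * (C * K ^ (j + 1)) := by
          gcongr
          · exact (abs_lt.2 hy).le
          · exact ha (j + 1)
      _ = C * K * ((R * K) ^ j / j !) := by rw [mul_pow]; ring
  rw [hsplit]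
  exact (hasDerivAt_tsum_of_isPreconnected
    ((Real.summable_pow_div_factorial (R * K)).mul_left (C * K)) isOpen_Ioo isPreconnected_Ioo
    (fun j y _ => hterm j y) hbound hx ((summable_nat_add_iff 1).2 (summable_egf ha x)) hx).const_add
    (a 0)

/-- In probabilistic terms, `d/dx E[a(ξ)] = E[a(ξ + 1) - a(ξ)]` for `ξ` Poisson of mean `x`. -/
theorem hasDerivAt_exp_neg_mul_egf (ha : ∀ j, |a j| ≤ C * K ^ j) (x : ℝ) :
    HasDerivAt (fun y => exp (-y) * egf a y) (exp (-x) * egf (fun j => a (j + 1) - a j) x) x := by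
  have ha' : ∀ j, |a (j + 1)| ≤ C * K * K ^ j := fun j => (ha (j + 1)).trans_eq (by ring)
  have hprod : HasDerivAt (fun y => exp (-y) * egf a y)
      (exp (-x) * -1 * egf a x + exp (-x) * egf (fun j => a (j + 1)) x) x :=
    (hasDerivAt_neg x).exp.mul (hasDerivAt_egf ha x)
  refine hprod.congr_deriv ?_
  simp only [egf, mul_sub]
  rw [(summable_egf ha' x).tsum_sub (summable_egf ha x)]
  ring

end egf

theorem stmt1 (m : ℝ) (hm : 0 < m) (x : ℝ) (hx : 0 ≤ x) :
    deriv (phi m) x = Real.exp (-x) * ∑' j : ℕ, x ^ j / ((Nat.factorial j : ℝ) * (m + j)) ∧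
    deriv (phi m) x = ∑' j : ℕ, poissonPMFReal ⟨x, hx⟩ j * (1 / (m + j)) := by
  have hphi : HasDerivAt (phi m)
      (exp (-x) * egf (fun j => psi ((j + 1 : ℕ) + m) - psi (j + m)) x) x :=
    hasDerivAt_exp_neg_mul_egf (abs_psi_nat_add_le_mul_two_pow hm) x
  have hderiv : deriv (phi m) x = exp (-x) * ∑' j : ℕ, x ^ j / ((j ! : ℝ) * (m + j)) := by
    rw [hphi.deriv, egf]
    congr 1
    refine tsum_congr fun j => ?_
    have hjm : 0 < (j : ℝ) + m := by positivity
    rw [show ((j + 1 : ℕ) : ℝ) + m = (j + m) + 1 by push_cast; ring, psi_add_one_of_pos hjm]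
    field_simp
    ring
  refine ⟨hderiv, ?_⟩
  rw [hderiv, ← tsum_mul_left]
  refine tsum_congr fun j => ?_
  simp only [poissonPMFReal]
  field_simp
  rfl
end

section
/- The map A ↦ |A| sending a real m×n matrix to its absolute value |A| = (AᵀA)^{1/2} (the unique positive semidefinite symmetric square root of AᵀA) is Lipschitz with constant √2 with respect to the Frobenius norm: ‖|A| − |B|‖_F ≤ √2 ‖A − B‖_F for all real m×n matrices A, B. -/
/-!
Embed `A` in the symmetric dilation `D_A = [[0, Aᴴ], [A, 0]]`, whose absolute value is
`diag(|A|, |Aᴴ|)`. For symmetric `H`, `K` both `|H| - H` and `|H| + H` are positive semidefinite,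
which gives `tr(H K) ≤ tr(|H| |K|)`; applied to `D_A`, `D_B` this reads
`2 tr(Aᴴ B) ≤ tr(|A| |B|) + tr(|Aᴴ| |Bᴴ|)`. Bounding the second term by
`(‖A‖_F² + ‖B‖_F²) / 2` (AM-GM for traces) and expanding
`‖|A| - |B|‖_F² = ‖A‖_F² + ‖B‖_F² - 2 tr(|A| |B|)` yields `‖|A| - |B|‖_F² ≤ 2 ‖A - B‖_F²`.
-/

open Matrix Real

/-- The absolute value |A| = (AᵀA)^{1/2} of a real rectangular matrix: the unique
positive semidefinite symmetric square root of AᵀA. -/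
noncomputable def matAbs {m n : ℕ} (A : Matrix (Fin m) (Fin n) ℝ) : Matrix (Fin n) (Fin n) ℝ :=
  (Matrix.posSemidef_conjTranspose_mul_self A).1.eigenvectorUnitary.1 *
    diagonal ((↑) ∘ (√·) ∘ (Matrix.posSemidef_conjTranspose_mul_self A).1.eigenvalues) *
    (star (Matrix.posSemidef_conjTranspose_mul_self A).1.eigenvectorUnitary : Matrix (Fin n) (Fin n) ℝ)

/-- The Frobenius norm of a real matrix. -/
noncomputable def frob {m n : ℕ} (A : Matrix (Fin m) (Fin n) ℝ) : ℝ :=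
  Real.sqrt (∑ i, ∑ j, (A i j) ^ 2)

open scoped MatrixOrder

namespace Matrix

variable {m n : Type*}

def hermitianDilation (A : Matrix m n ℝ) : Matrix (n ⊕ m) (n ⊕ m) ℝ := fromBlocks 0 Aᴴ A 0

lemma isHermitian_hermitianDilation (A : Matrix m n ℝ) : (hermitianDilation A).IsHermitian := by
  rw [IsHermitian, hermitianDilation, fromBlocks_conjTranspose, conjTranspose_conjTranspose]
  simp only [conjTranspose_zero]

variable [Fintype m] [Fintype n]

lemma hermitianDilation_mul_hermitianDilation (A B : Matrix m n ℝ) :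
    hermitianDilation A * hermitianDilation B = fromBlocks (Aᴴ * B) 0 0 (A * Bᴴ) := by
  simp [hermitianDilation, fromBlocks_multiply]

lemma trace_fromBlocks (A : Matrix n n ℝ) (B : Matrix n m ℝ) (C : Matrix m n ℝ)
    (D : Matrix m m ℝ) : (fromBlocks A B C D).trace = A.trace + D.trace := by
  simp [trace, Fintype.sum_sum_type]

lemma trace_conjTranspose_mul_comm (A B : Matrix m n ℝ) : (Bᴴ * A).trace = (Aᴴ * B).trace := by
  simpa using trace_conjTranspose (Aᴴ * B)

lemma trace_conjTranspose_mul_sub (A B : Matrix m n ℝ) :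
    ((A - B)ᴴ * (A - B)).trace = (Aᴴ * A).trace + (Bᴴ * B).trace - 2 * (Aᴴ * B).trace := by
  simp only [conjTranspose_sub, Matrix.sub_mul, Matrix.mul_sub, trace_sub,
    trace_conjTranspose_mul_comm A B]
  ring

variable [DecidableEq n]

lemma trace_mul_nonneg {P Q : Matrix n n ℝ} (hP : P.PosSemidef) (hQ : Q.PosSemidef) :
    0 ≤ (P * Q).trace := by
  have h := (hQ.conjTranspose_mul_mul_same (CFC.sqrt P)).trace_nonneg
  rwa [(CFC.sqrt_nonneg P).posSemidef.1.eq, trace_mul_cycle,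
    CFC.sqrt_mul_sqrt_self P hP.nonneg] at h

lemma trace_mul_le_trace_abs_mul_abs {H K : Matrix n n ℝ} (hH : H.IsHermitian)
    (hK : K.IsHermitian) : (H * K).trace ≤ (CFC.abs H * CFC.abs K).trace := by
  have hH' : IsSelfAdjoint H := hH
  have hK' : IsSelfAdjoint K := hK
  have h₁ := trace_mul_nonneg
    (CFC.abs_sub_self H ▸ smul_nonneg zero_le_two (CFC.negPart_nonneg H) |>.posSemidef)
    (CFC.abs_add_self K ▸ smul_nonneg zero_le_two (CFC.posPart_nonneg K) |>.posSemidef)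
  have h₂ := trace_mul_nonneg
    (CFC.abs_add_self H ▸ smul_nonneg zero_le_two (CFC.posPart_nonneg H) |>.posSemidef)
    (CFC.abs_sub_self K ▸ smul_nonneg zero_le_two (CFC.negPart_nonneg K) |>.posSemidef)
  simp only [sub_mul, mul_sub, add_mul, mul_add, trace_sub, trace_add] at h₁ h₂
  linarith

lemma trace_sqrt_sub_sqrt_sq {P Q : Matrix n n ℝ} (hP : P.PosSemidef) (hQ : Q.PosSemidef) :
    ((CFC.sqrt P - CFC.sqrt Q)ᴴ * (CFC.sqrt P - CFC.sqrt Q)).trace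
      = P.trace + Q.trace - 2 * (CFC.sqrt P * CFC.sqrt Q).trace := by
  rw [trace_conjTranspose_mul_sub, (CFC.sqrt_nonneg P).posSemidef.1.eq,
    (CFC.sqrt_nonneg Q).posSemidef.1.eq, CFC.sqrt_mul_sqrt_self P hP.nonneg,
    CFC.sqrt_mul_sqrt_self Q hQ.nonneg]

lemma two_mul_trace_sqrt_mul_sqrt_le {P Q : Matrix n n ℝ} (hP : P.PosSemidef)
    (hQ : Q.PosSemidef) : 2 * (CFC.sqrt P * CFC.sqrt Q).trace ≤ P.trace + Q.trace := by
  have := (posSemidef_conjTranspose_mul_self (CFC.sqrt P - CFC.sqrt Q)).trace_nonneg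
  rw [trace_sqrt_sub_sqrt_sq hP hQ] at this
  linarith

variable [DecidableEq m]

lemma PosSemidef.fromBlocks_zero {P : Matrix n n ℝ} {Q : Matrix m m ℝ} (hP : P.PosSemidef)
    (hQ : Q.PosSemidef) : (fromBlocks P 0 0 Q).PosSemidef := by
  have hS : IsSelfAdjoint (fromBlocks (CFC.sqrt P) 0 0 (CFC.sqrt Q)) := by
    rw [IsSelfAdjoint, star_eq_conjTranspose, fromBlocks_conjTranspose,
      (CFC.sqrt_nonneg P).posSemidef.1.eq, (CFC.sqrt_nonneg Q).posSemidef.1.eq,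
      conjTranspose_zero, conjTranspose_zero]
  convert posSemidef_conjTranspose_mul_self (fromBlocks (CFC.sqrt P) 0 0 (CFC.sqrt Q))
  rw [← star_eq_conjTranspose, hS.star_eq, fromBlocks_multiply]
  simp [CFC.sqrt_mul_sqrt_self P hP.nonneg, CFC.sqrt_mul_sqrt_self Q hQ.nonneg]

lemma sqrt_fromBlocks_zero {P : Matrix n n ℝ} {Q : Matrix m m ℝ} (hP : P.PosSemidef)
    (hQ : Q.PosSemidef) :
    CFC.sqrt (fromBlocks P 0 0 Q) = fromBlocks (CFC.sqrt P) 0 0 (CFC.sqrt Q) := by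
  refine CFC.sqrt_unique ?_ ?_
  · simp [fromBlocks_multiply, CFC.sqrt_mul_sqrt_self P hP.nonneg,
      CFC.sqrt_mul_sqrt_self Q hQ.nonneg]
  · exact ((CFC.sqrt_nonneg P).posSemidef.fromBlocks_zero (CFC.sqrt_nonneg Q).posSemidef).nonneg

lemma abs_hermitianDilation (A : Matrix m n ℝ) :
    CFC.abs (hermitianDilation A) = fromBlocks (CFC.sqrt (Aᴴ * A)) 0 0 (CFC.sqrt (A * Aᴴ)) := by
  rw [CFC.abs, star_eq_conjTranspose, (isHermitian_hermitianDilation A).eq,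
    hermitianDilation_mul_hermitianDilation, sqrt_fromBlocks_zero
      (posSemidef_conjTranspose_mul_self A) (posSemidef_self_mul_conjTranspose A)]

lemma two_mul_trace_conjTranspose_mul_le (A B : Matrix m n ℝ) :
    2 * (Aᴴ * B).trace ≤ (CFC.sqrt (Aᴴ * A) * CFC.sqrt (Bᴴ * B)).trace
      + (CFC.sqrt (A * Aᴴ) * CFC.sqrt (B * Bᴴ)).trace := by
  have h := trace_mul_le_trace_abs_mul_abs (isHermitian_hermitianDilation A)
    (isHermitian_hermitianDilation B)
  rw [abs_hermitianDilation, abs_hermitianDilation, fromBlocks_multiply,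
    hermitianDilation_mul_hermitianDilation, trace_fromBlocks, trace_fromBlocks, trace_mul_comm A,
    trace_conjTranspose_mul_comm A B] at h
  simpa [two_mul] using h

lemma trace_sqrt_sub_sqrt_sq_le_two_mul (A B : Matrix m n ℝ) :
    ((CFC.sqrt (Aᴴ * A) - CFC.sqrt (Bᴴ * B))ᴴ * (CFC.sqrt (Aᴴ * A) - CFC.sqrt (Bᴴ * B))).trace
      ≤ 2 * ((A - B)ᴴ * (A - B)).trace := by
  have h₁ := two_mul_trace_conjTranspose_mul_le A B
  have h₂ := two_mul_trace_sqrt_mul_sqrt_le (posSemidef_self_mul_conjTranspose A)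
    (posSemidef_self_mul_conjTranspose B)
  rw [trace_mul_comm A, trace_mul_comm B] at h₂
  rw [trace_sqrt_sub_sqrt_sq (posSemidef_conjTranspose_mul_self A)
    (posSemidef_conjTranspose_mul_self B), trace_conjTranspose_mul_sub]
  linarith

end Matrix

lemma matAbs_eq_sqrt {m n : ℕ} (A : Matrix (Fin m) (Fin n) ℝ) :
    matAbs A = CFC.sqrt (Aᴴ * A) := by
  have hA := posSemidef_conjTranspose_mul_self A
  rw [CFC.sqrt_eq_cfc, cfc_nnreal_eq_real _ _ hA.nonneg, hA.1.cfc_eq, matAbs, IsHermitian.cfc]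
  simp only [Function.comp_def, Real.coe_toNNReal', Real.coe_sqrt,
    max_eq_left (hA.eigenvalues_nonneg _), Unitary.conjStarAlgAut_apply]
  rfl

lemma frob_eq_sqrt_trace {m n : ℕ} (A : Matrix (Fin m) (Fin n) ℝ) :
    frob A = √(Aᴴ * A).trace := by
  simp only [frob, sq, trace, conjTranspose_eq_transpose_of_trivial, diag_apply, mul_apply,
    transpose_apply]
  rw [Finset.sum_comm]

theorem stmt14 {m n : ℕ} (A B : Matrix (Fin m) (Fin n) ℝ) :
    frob (matAbs A - matAbs B) ≤ Real.sqrt 2 * frob (A - B) := by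
  rw [frob_eq_sqrt_trace, frob_eq_sqrt_trace, matAbs_eq_sqrt, matAbs_eq_sqrt,
    ← Real.sqrt_mul zero_le_two]
  exact Real.sqrt_le_sqrt (trace_sqrt_sub_sqrt_sq_le_two_mul A B)
end
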